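/- Specialisation to the first variation: for every marked alphabet R′ = M ∪̇ N′ on {1,…,m+n} with |M| = m and |N| = n, setting all factorial parameters to zero recovers the classical supersymmetric skew Schur function: for all partitions μ ⊆ λ and all x = (x_1,…,x_m), y = (y_1,…,y_n) in a commutative ring, s^{R′}_{λ/μ}(x,y|0) = s_{λ/μ}(x,y), where 0 denotes the doubly infinite family with a_t = 0 for all t ∈ ℤ. -/

import Mathlib

/-!
With all factorial parameters zero, the weight of a letter no longer depends on the content of
its box: the `k`-th unprimed letter weighs `x k` and the `ℓ`-th primed letter `y ℓ`. Sorting a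
marking into `1 < ⋯ < m < 1′ < ⋯ < n′` by exchanging adjacent letters `a′ < b` into `a < b′`,
it suffices to show that such an exchange does not change the weighted tableau sum.

In a supertableau the cells holding `a` or `b` form a skew shape without `2 × 2` blocks, that is,
a disjoint union of lattice paths. On each path the letters are forced by the steps of the path
except at one end: the last cell for `a < b′`, the first cell for `a′ < b`. Rewriting every path
in the forced pattern of the other order, with `a` in its first cell exactly when `b` was in its
last cell, is a bijection between the two sets of tableaux under which the number of `a`'s of
the new tableau is the number of `b`'s of the old one.
-/

namespace SuperSchur

variable {A : Type*} [CommRing A]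

/-- The content of a box `(i, j)` (rows and columns indexed from 0;
row `i` occupies columns `μ_i ≤ j < λ_i`, so the content is `j - i`). -/
def content (p : ℕ × ℕ) : ℤ := (p.2 : ℤ) - (p.1 : ℤ)

/-- The cells of the skew Young diagram `F^{λ/μ}` (0-indexed rows and columns). -/
def cells (lam mu : List ℕ) : Finset (ℕ × ℕ) :=
  (Finset.range lam.length).biUnion fun i =>
    (Finset.Ico (mu.getD i 0) (lam.getD i 0)).image fun j => (i, j)

/-- `l` is a partition: a weakly decreasing list of positive integers. -/
def IsPartition (l : List ℕ) : Prop := l.Pairwise (· ≥ ·) ∧ ∀ x ∈ l, 0 < x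

/-- `μ ⊆ λ`. -/
def Contained (mu lam : List ℕ) : Prop := ∀ i, mu.getD i 0 ≤ lam.getD i 0

/-- `T` is a skew supertableau on the cell set `C` over the marked alphabet `Fin NA`
(letters in their natural order), where `prm r = true` means the letter `r` is primed:
entries weakly increase along rows and down columns, no two equal unprimed entries lie
in the same column, and no two equal primed entries lie in the same row. -/
def IsSuperTab {NA : ℕ} (C : Finset (ℕ × ℕ)) (prm : Fin NA → Bool)
    (T : {p // p ∈ C} → Fin NA) : Prop :=
  (∀ u v : {p // p ∈ C}, u.1.1 = v.1.1 → u.1.2 ≤ v.1.2 → T u ≤ T v) ∧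
  (∀ u v : {p // p ∈ C}, u.1.2 = v.1.2 → u.1.1 ≤ v.1.1 → T u ≤ T v) ∧
  (∀ u v : {p // p ∈ C}, u.1.2 = v.1.2 → u.1.1 ≠ v.1.1 → prm (T u) = false → T u ≠ T v) ∧
  (∀ u v : {p // p ∈ C}, u.1.1 = v.1.1 → u.1.2 ≠ v.1.2 → prm (T u) = true → T u ≠ T v)

open Classical in
/-- Generic weighted sum over all skew supertableaux on `C`: the weight of the letter `r`
placed in a box of content `c` is `w r c`. -/
noncomputable def tabSum {NA : ℕ} (C : Finset (ℕ × ℕ)) (prm : Fin NA → Bool)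
    (w : Fin NA → ℤ → A) : A :=
  ∑ T ∈ Finset.univ.filter (fun T : {p // p ∈ C} → Fin NA => IsSuperTab C prm T),
    ∏ u : {p // p ∈ C}, w (T u) (content u.1)

/-- The (1-based) index of the letter `r` among the letters with the same marking:
if `r` is the k-th smallest unprimed letter then `idx prm r = k`, and similarly
for primed letters. -/
def idx {NA : ℕ} (prm : Fin NA → Bool) (r : Fin NA) : ℕ :=
  (Finset.univ.filter fun r' => prm r' = prm r ∧ r' ≤ r).card

/-- `σ(r) = #{i ∈ M : i ≤ r} - #{j ∈ N : j ≤ r}`, plus `1` if `r` is primed. -/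
def sigma {NA : ℕ} (prm : Fin NA → Bool) (r : Fin NA) : ℤ :=
  ((Finset.univ.filter fun r' : Fin NA => prm r' = false ∧ r' ≤ r).card : ℤ)
    - ((Finset.univ.filter fun r' : Fin NA => prm r' = true ∧ r' ≤ r).card : ℤ)
    + (if prm r then 1 else 0)

/-- Ninth-variation weights: the k-th unprimed letter in a box of content `c`
carries weight `X k c`, and the ℓ-th primed letter carries `Y ℓ c`. -/
def wNinth {m n NA : ℕ} (prm : Fin NA → Bool) (X : Fin m → ℤ → A) (Y : Fin n → ℤ → A) :
    Fin NA → ℤ → A := fun r c =>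
  if prm r then (if h : idx prm r - 1 < n then Y ⟨idx prm r - 1, h⟩ c else 0)
  else (if h : idx prm r - 1 < m then X ⟨idx prm r - 1, h⟩ c else 0)

/-- Factorial supersymmetric weights: the k-th unprimed letter `r` in a box of content `c`
carries weight `x k + a (σ(r) + c)`, and the ℓ-th primed letter `r` carries
`y ℓ - a (σ(r) + c)`. -/
def wFact {m n NA : ℕ} (prm : Fin NA → Bool) (x : Fin m → A) (y : Fin n → A) (a : ℤ → A) :
    Fin NA → ℤ → A := fun r c =>
  if prm r then
    (if h : idx prm r - 1 < n then y ⟨idx prm r - 1, h⟩ else 0) - a (sigma prm r + c)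
  else
    (if h : idx prm r - 1 < m then x ⟨idx prm r - 1, h⟩ else 0) + a (sigma prm r + c)

/-- The marked alphabet `1 < 2 < ⋯ < m < 1′ < 2′ < ⋯ < n′`. -/
def prmFirst (m n : ℕ) : Fin (m + n) → Bool := fun r => decide (m ≤ (r : ℕ))

/-- The classical (first variation) supersymmetric skew Schur function `s_{λ/μ}(x,y)`. -/
noncomputable def superSchur (lam mu : List ℕ) {m n : ℕ} (x : Fin m → A) (y : Fin n → A) : A :=
  tabSum (cells lam mu) (prmFirst m n) (wNinth (prmFirst m n) (fun k _ => x k) (fun l _ => y l))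

/-- The row (counted from the top, 0-based) of the box of content `c` in the canonical
realisation of the segment of the cutting strip ending at content `d`:
the number of vertical steps strictly between `c` and `d`. -/
noncomputable def ribRow (dir : ℤ → Bool) (d c : ℤ) : ℕ :=
  ((Finset.Ioc c d).filter fun c' => dir c' = true).card

/-- The shift `m(p,q)`: the content (within the cutting strip) of the box of the ribbon
`φ_{ad}` that lies on the main diagonal of the skew diagram whose outer rim is `φ_{ad}`. -/
noncomputable def mShift (dir : ℤ → Bool) (a d : ℤ) : ℤ := a + (ribRow dir d a : ℤ)

/-- The ribbon `φ_{ad}` of the cutting strip, realised canonically as a skew diagram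
in its own right (its box of cutting-strip content `c` gets standard content
`c - mShift dir a d`). -/
noncomputable def ribbonCells (dir : ℤ → Bool) (a d : ℤ) : Finset (ℕ × ℕ) :=
  (Finset.Icc a d).image fun c =>
    (ribRow dir d c, (c + (ribRow dir d c : ℤ) - mShift dir a d).toNat)

/-- The cell set `S` coincides in shape and contents with the segment `φ_{ab}` of the
cutting strip described by `dir` (where `dir c = true` iff the box of content `c - 1`
lies below the box of content `c`, and `dir c = false` iff it lies to its left). -/
def StripMatches (dir : ℤ → Bool) (a b : ℤ) (S : Finset (ℕ × ℕ)) : Prop :=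
  (∀ c : ℤ, (a ≤ c ∧ c ≤ b) ↔ ∃ u ∈ S, content u = c) ∧
  (∀ u ∈ S, ∀ v ∈ S, content u = content v → u = v) ∧
  (∀ u ∈ S, ∀ v ∈ S, content v = content u + 1 →
    if dir (content v) then v.1 + 1 = u.1 ∧ v.2 = u.2 else v.1 = u.1 ∧ u.2 + 1 = v.2)

/-- `(dir, ab, θ)` is an outside decomposition of `F^{λ/μ}`: the strips `θ p` are
pairwise disjoint with union the whole diagram, each `θ p` coincides in shape
and contents with the segment `φ_{(ab p).1, (ab p).2}` of the common cutting strip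
described by `dir`, the starting box of each strip lies on the left or bottom boundary,
the ending box of each strip lies on the right or top boundary, and the cutting strip
contains a box of every relevant content occurring in the diagram. -/
def OutsideDecomp (lam mu : List ℕ) {s : ℕ} (dir : ℤ → Bool)
    (ab : Fin s → ℤ × ℤ) (θ : Fin s → Finset (ℕ × ℕ)) : Prop :=
  (∀ p q : Fin s, p ≠ q → Disjoint (θ p) (θ q)) ∧
  (Finset.univ.biUnion θ = cells lam mu) ∧
  (∀ p : Fin s, StripMatches dir (ab p).1 (ab p).2 (θ p)) ∧
  (∀ p : Fin s, ∀ u ∈ θ p, content u = (ab p).1 →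
    u.2 = 0 ∨ (u.1, u.2 - 1) ∉ cells lam mu ∨ (u.1 + 1, u.2) ∉ cells lam mu) ∧
  (∀ p : Fin s, ∀ u ∈ θ p, content u = (ab p).2 →
    (u.1, u.2 + 1) ∉ cells lam mu ∨ u.1 = 0 ∨ (u.1 - 1, u.2) ∉ cells lam mu) ∧
  (∀ p q : Fin s, ∀ c : ℤ, (ab p).1 ≤ c → c ≤ (ab q).2 → ∃ u ∈ cells lam mu, content u = c)

/-- Two boxes are edgewise adjacent. -/
def CellAdj (u v : ℕ × ℕ) : Prop :=
  (u.1 = v.1 ∧ (u.2 + 1 = v.2 ∨ v.2 + 1 = u.2)) ∨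
  (u.2 = v.2 ∧ (u.1 + 1 = v.1 ∨ v.1 + 1 = u.1))

/-- `C` is edgewise connected. -/
def ConnectedCells (C : Finset (ℕ × ℕ)) : Prop :=
  ∀ u ∈ C, ∀ v ∈ C,
    Relation.ReflTransGen (fun p q => p ∈ C ∧ q ∈ C ∧ CellAdj p q) u v

/-- `C` contains no 2×2 block of boxes. -/
def NoTwoByTwo (C : Finset (ℕ × ℕ)) : Prop :=
  ∀ i j : ℕ, ¬((i, j) ∈ C ∧ (i + 1, j) ∈ C ∧ (i, j + 1) ∈ C ∧ (i + 1, j + 1) ∈ C)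

/-- `C` is a ribbon: nonempty, edgewise connected, with no 2×2 block of boxes. -/
def IsRibbon (C : Finset (ℕ × ℕ)) : Prop :=
  C.Nonempty ∧ ConnectedCells C ∧ NoTwoByTwo C

/-- `T` is an ordered Young tableau on `C`: entries weakly increase along rows and
down columns, and strictly increase down diagonals. -/
def IsOYT {nL : ℕ} (C : Finset (ℕ × ℕ)) (T : {p // p ∈ C} → Fin nL) : Prop :=
  (∀ u v : {p // p ∈ C}, u.1.1 = v.1.1 → u.1.2 ≤ v.1.2 → T u ≤ T v) ∧
  (∀ u v : {p // p ∈ C}, u.1.2 = v.1.2 → u.1.1 ≤ v.1.1 → T u ≤ T v) ∧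
  (∀ u v : {p // p ∈ C}, u.1.1 + 1 = v.1.1 → u.1.2 + 1 = v.1.2 → T u < T v)

/-- The number `h(T)` of horizontally adjacent pairs of equal entries. -/
def horizPairs {nL : ℕ} (C : Finset (ℕ × ℕ)) (T : {p // p ∈ C} → Fin nL) : ℕ :=
  (Finset.univ.filter fun uv : {p // p ∈ C} × {p // p ∈ C} =>
    uv.1.1.1 = uv.2.1.1 ∧ uv.1.1.2 + 1 = uv.2.1.2 ∧ T uv.1 = T uv.2).card

/-- The number `v(T)` of vertically adjacent pairs of equal entries. -/
def vertPairs {nL : ℕ} (C : Finset (ℕ × ℕ)) (T : {p // p ∈ C} → Fin nL) : ℕ :=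
  (Finset.univ.filter fun uv : {p // p ∈ C} × {p // p ∈ C} =>
    uv.1.1.2 = uv.2.1.2 ∧ uv.1.1.1 + 1 = uv.2.1.1 ∧ T uv.1 = T uv.2).card

open Classical in
/-- Bachmann's ordered-Young-tableau Schur function of the cell set `C`. -/
noncomputable def bacSum (C : Finset (ℕ × ℕ)) {nL : ℕ} (F : Fin nL → ℤ → A) (t : A) : A :=
  ∑ T ∈ Finset.univ.filter (fun T : {p // p ∈ C} → Fin nL => IsOYT C T),
    t ^ vertPairs C T * (1 - t) ^ horizPairs C T *
      ∏ u : {p // p ∈ C}, F (T u) (content u.1)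

/-- Molev's factorial supersymmetric weights on the alphabet
`n′ < ⋯ < 2′ < 1′ < 1 < 2 < ⋯ < m` (position `p < n` is the letter `(n-p)′`,
position `n + k - 1` is the letter `k`): the letter `k` in a box of content `c`
carries weight `x k + a (k + c)` and the letter `ℓ′` carries `y ℓ - a (ℓ + c)`. -/
def wMol {m n : ℕ} (x : Fin m → A) (y : Fin n → A) (a : ℤ → A) : Fin (m + n) → ℤ → A :=
  fun r c =>
    if h : (r : ℕ) < n then
      y ⟨n - 1 - (r : ℕ), by omega⟩ - a (((n : ℤ) - ((r : ℕ) : ℤ)) + c)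
    else
      x ⟨(r : ℕ) - n, by have := r.isLt; omega⟩ + a ((((r : ℕ) : ℤ) - (n : ℤ) + 1) + c)

section Walk

variable {α : Type*}

def walk (f : α → Option α) : ℕ → α → α
  | 0, p => p
  | k + 1, p => match f p with
    | none => p
    | some q => walk f k q

variable {f : α → Option α}

lemma walk_of_eq_none {p : α} (h : f p = none) (k : ℕ) : walk f k p = p := by
  cases k <;> simp [walk, h]

lemma walk_mem {S : Set α} (hS : ∀ p q, f p = some q → q ∈ S) :
    ∀ (k : ℕ) {p : α}, p ∈ S → walk f k p ∈ S
  | 0, _, hp => hp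
  | k + 1, p, hp => by
    cases hq : f p with
    | none => simpa [walk, hq] using hp
    | some q => simpa [walk, hq] using walk_mem hS k (hS p q hq)

lemma walk_invariant {β : Type*} {S : Set α} {g : α → β} (hS : ∀ p q, f p = some q → q ∈ S)
    (hg : ∀ p q, p ∈ S → f p = some q → g q = g p) :
    ∀ (k : ℕ) {p : α}, p ∈ S → g (walk f k p) = g p
  | 0, _, _ => rfl
  | k + 1, p, hp => by
    cases hq : f p with
    | none => simp [walk, hq]
    | some q =>
      simp only [walk, hq]
      rw [walk_invariant hS hg k (hS p q hq), hg p q hp hq]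

lemma walk_eq_none {μ : α → ℕ} (hμ : ∀ p q, f p = some q → μ q < μ p) :
    ∀ (k : ℕ) {p : α}, μ p ≤ k → f (walk f k p) = none
  | 0, p, hp => by
    cases hq : f p with
    | none => simpa [walk] using hq
    | some q => exact absurd (hμ p q hq) (by omega)
  | k + 1, p, hp => by
    cases hq : f p with
    | none => simp [walk, hq]
    | some q =>
      have := hμ p q hq
      simpa [walk, hq] using walk_eq_none hμ k (p := q) (by omega)

lemma walk_succ {μ : α → ℕ} (hμ : ∀ p q, f p = some q → μ q < μ p) :
    ∀ (k : ℕ) {p : α}, μ p ≤ k → walk f (k + 1) p = walk f k p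
  | 0, p, hp => by
    cases hq : f p with
    | none => simp [walk, hq]
    | some q => exact absurd (hμ p q hq) (by omega)
  | k + 1, p, hp => by
    cases hq : f p with
    | none => simp [walk, hq]
    | some q =>
      have := hμ p q hq
      simp only [walk, hq]
      exact walk_succ hμ k (by omega)

/-- The fuel `D.card` suffices when `f` stays in `D` and strictly increases a potential. -/
def chainEnd (D : Finset α) (f : α → Option α) (p : α) : α := walk f D.card p

variable {D : Finset α} {φ : α → ℤ}

lemma card_above_lt (hf : ∀ p q, f p = some q → q ∈ D ∧ φ p < φ q) (p q : α)
    (h : f p = some q) :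
    (D.filter fun r => φ q < φ r).card < (D.filter fun r => φ p < φ r).card := by
  obtain ⟨hq, hpq⟩ := hf p q h
  refine Finset.card_lt_card ⟨fun r hr => ?_, fun hsub => ?_⟩
  · simp only [Finset.mem_filter] at hr ⊢
    exact ⟨hr.1, hpq.trans hr.2⟩
  · simpa using (Finset.mem_filter.1 (hsub (Finset.mem_filter.2 ⟨hq, hpq⟩))).2

lemma chainEnd_mem (hf : ∀ p q, f p = some q → q ∈ D) {p : α} (hp : p ∈ D) :
    chainEnd D f p ∈ D :=
  show walk f D.card p ∈ (D : Set α) from walk_mem hf D.card hp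

lemma eq_none_chainEnd (hf : ∀ p q, f p = some q → q ∈ D ∧ φ p < φ q) (p : α) :
    f (chainEnd D f p) = none :=
  walk_eq_none (μ := fun p => (D.filter fun r => φ p < φ r).card) (card_above_lt hf) _
    (Finset.card_filter_le _ _)

lemma chainEnd_of_eq_none {p : α} (h : f p = none) : chainEnd D f p = p :=
  walk_of_eq_none h _

lemma chainEnd_of_eq_some (hf : ∀ p q, f p = some q → q ∈ D ∧ φ p < φ q) {p q : α}
    (h : f p = some q) : chainEnd D f p = chainEnd D f q := by
  have hlt := card_above_lt hf p q h
  have hle := Finset.card_filter_le D fun r => φ p < φ r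
  obtain ⟨k, hk⟩ : ∃ k, D.card = k + 1 := ⟨D.card - 1, by omega⟩
  simp only [chainEnd, hk, walk, h]
  exact (walk_succ (μ := fun p => (D.filter fun r => φ p < φ r).card) (card_above_lt hf) k
    (by omega)).symm

end Walk

section Shape

lemma mem_cells {lam mu : List ℕ} {p : ℕ × ℕ} :
    p ∈ cells lam mu ↔ p.1 < lam.length ∧ mu.getD p.1 0 ≤ p.2 ∧ p.2 < lam.getD p.1 0 := by
  obtain ⟨i, j⟩ := p
  simp only [cells, Finset.mem_biUnion, Finset.mem_range, Finset.mem_image, Finset.mem_Ico,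
    Prod.mk.injEq]
  constructor
  · rintro ⟨i, hi, j, hj, rfl, rfl⟩
    exact ⟨hi, hj⟩
  · rintro ⟨hi, hj⟩
    exact ⟨i, hi, j, hj, rfl, rfl⟩

lemma getD_le_getD_of_le {l : List ℕ} (hl : l.Pairwise (· ≥ ·)) {i j : ℕ} (hij : i ≤ j) :
    l.getD j 0 ≤ l.getD i 0 := by
  by_cases hj : j < l.length
  · rw [List.getD_eq_getElem l 0 hj, List.getD_eq_getElem l 0 (hij.trans_lt hj)]
    rcases hij.eq_or_lt with rfl | hlt
    · rfl
    · exact List.Pairwise.rel_get_of_lt hl hlt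
  · rw [List.getD_eq_default l 0 (not_lt.1 hj)]
    exact Nat.zero_le _

structure IsSkewShape (C : Finset (ℕ × ℕ)) : Prop where
  row_convex : ∀ {i j₁ j₂ j}, (i, j₁) ∈ C → (i, j₂) ∈ C → j₁ ≤ j → j ≤ j₂ → (i, j) ∈ C
  col_convex : ∀ {i₁ i₂ i j}, (i₁, j) ∈ C → (i₂, j) ∈ C → i₁ ≤ i → i ≤ i₂ → (i, j) ∈ C
  diag_fill : ∀ {i j}, (i, j) ∈ C → (i + 1, j + 1) ∈ C → (i, j + 1) ∈ C ∧ (i + 1, j) ∈ C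

lemma isSkewShape_cells {lam mu : List ℕ} (hlam : IsPartition lam) (hmu : IsPartition mu) :
    IsSkewShape (cells lam mu) where
  row_convex h₁ h₂ hj₁ hj₂ := by
    rw [mem_cells] at h₁ h₂ ⊢
    exact ⟨h₁.1, h₁.2.1.trans hj₁, hj₂.trans_lt h₂.2.2⟩
  col_convex {i₁ i₂ i j} h₁ h₂ hi₁ hi₂ := by
    rw [mem_cells] at h₁ h₂ ⊢
    have := getD_le_getD_of_le hmu.1 hi₁
    have := getD_le_getD_of_le hlam.1 hi₂
    dsimp only at *
    exact ⟨lt_of_le_of_lt hi₂ h₂.1, by omega, by omega⟩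
  diag_fill {i j} h₁ h₂ := by
    rw [mem_cells] at h₁ h₂
    rw [mem_cells, mem_cells]
    have := getD_le_getD_of_le hmu.1 (by omega : i ≤ i + 1)
    have := getD_le_getD_of_le hlam.1 (by omega : i ≤ i + 1)
    dsimp only at *
    omega

end Shape

section Paths

variable {D : Finset (ℕ × ℕ)} {p q : ℕ × ℕ}

abbrev HasUp (D : Finset (ℕ × ℕ)) (p : ℕ × ℕ) : Prop := 0 < p.1 ∧ (p.1 - 1, p.2) ∈ D

abbrev HasDown (D : Finset (ℕ × ℕ)) (p : ℕ × ℕ) : Prop := (p.1 + 1, p.2) ∈ D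

abbrev HasLeft (D : Finset (ℕ × ℕ)) (p : ℕ × ℕ) : Prop := 0 < p.2 ∧ (p.1, p.2 - 1) ∈ D

abbrev HasRight (D : Finset (ℕ × ℕ)) (p : ℕ × ℕ) : Prop := (p.1, p.2 + 1) ∈ D

lemma IsSkewShape.hasRight_of_lt {D : Finset (ℕ × ℕ)} (hD : IsSkewShape D) (hp : p ∈ D)
    (hq : q ∈ D) (h₁ : p.1 = q.1) (h₂ : p.2 < q.2) : HasRight D p :=
  hD.row_convex (j₁ := p.2) (j₂ := q.2) hp (h₁ ▸ hq) (by omega) h₂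

lemma IsSkewShape.hasLeft_of_lt {D : Finset (ℕ × ℕ)} (hD : IsSkewShape D) (hp : p ∈ D)
    (hq : q ∈ D) (h₁ : p.1 = q.1) (h₂ : p.2 < q.2) : HasLeft D q :=
  ⟨by omega, hD.row_convex (j₁ := p.2) (j₂ := q.2) (h₁ ▸ hp) hq (by omega) (by omega)⟩

lemma IsSkewShape.hasDown_of_lt {D : Finset (ℕ × ℕ)} (hD : IsSkewShape D) (hp : p ∈ D)
    (hq : q ∈ D) (h₁ : p.2 = q.2) (h₂ : p.1 < q.1) : HasDown D p :=
  hD.col_convex (i₁ := p.1) (i₂ := q.1) hp (h₁ ▸ hq) (by omega) h₂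

lemma IsSkewShape.hasUp_of_lt {D : Finset (ℕ × ℕ)} (hD : IsSkewShape D) (hp : p ∈ D)
    (hq : q ∈ D) (h₁ : p.2 = q.2) (h₂ : p.1 < q.1) : HasUp D q :=
  ⟨by omega, hD.col_convex (i₁ := p.1) (i₂ := q.1) (h₁ ▸ hp) hq (by omega) (by omega)⟩

def stepUp (D : Finset (ℕ × ℕ)) (p : ℕ × ℕ) : Option (ℕ × ℕ) :=
  if HasUp D p then some (p.1 - 1, p.2) else if HasRight D p then some (p.1, p.2 + 1) else none

def stepDown (D : Finset (ℕ × ℕ)) (p : ℕ × ℕ) : Option (ℕ × ℕ) :=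
  if HasDown D p then some (p.1 + 1, p.2) else if HasLeft D p then some (p.1, p.2 - 1) else none

lemma stepUp_spec (h : stepUp D p = some q) : q ∈ D ∧ content p < content q := by
  unfold stepUp at h
  split_ifs at h with h₁ h₂ <;> cases h
  · exact ⟨h₁.2, by unfold content; push_cast [Nat.cast_sub h₁.1]; omega⟩
  · exact ⟨h₂, by unfold content; push_cast; omega⟩

lemma stepDown_spec (h : stepDown D p = some q) : q ∈ D ∧ -content p < -content q := by
  unfold stepDown at h
  split_ifs at h with h₁ h₂ <;> cases h
  · exact ⟨h₁, by unfold content; push_cast; omega⟩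
  · exact ⟨h₂.2, by unfold content; push_cast [Nat.cast_sub h₂.1]; omega⟩

lemma stepUp_eq_none_iff : stepUp D p = none ↔ ¬ HasUp D p ∧ ¬ HasRight D p := by
  unfold stepUp
  split_ifs <;> simp_all

lemma stepDown_eq_none_iff : stepDown D p = none ↔ ¬ HasDown D p ∧ ¬ HasLeft D p := by
  unfold stepDown
  split_ifs <;> simp_all

/-- `D` is a disjoint union of lattice paths running north-east. -/
structure NoBranching (D : Finset (ℕ × ℕ)) : Prop where
  not_up_and_right : ∀ p ∈ D, HasUp D p → ¬ HasRight D p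
  not_down_and_left : ∀ p ∈ D, HasDown D p → ¬ HasLeft D p

lemma NoBranching.stepDown_of_stepUp (hD : NoBranching D) (hp : p ∈ D)
    (h : stepUp D p = some q) : stepDown D q = some p := by
  obtain ⟨i, j⟩ := p
  unfold stepUp at h
  split_ifs at h with h₁ h₂ <;> cases h
  · simp only [stepDown, HasDown, Nat.sub_add_cancel h₁.1, if_pos hp]
  · have : ¬ HasDown D (i, j + 1) := fun h => hD.not_down_and_left _ h₂ h ⟨by simp, by simpa⟩
    simp [stepDown, this, hp]

lemma NoBranching.stepUp_of_stepDown (hD : NoBranching D) (hp : p ∈ D)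
    (h : stepDown D p = some q) : stepUp D q = some p := by
  obtain ⟨i, j⟩ := p
  unfold stepDown at h
  split_ifs at h with h₁ h₂ <;> cases h
  · simp [stepUp, hp]
  · have : ¬ HasUp D (i, j - 1) := fun h => hD.not_up_and_right _ h₂.2 h (by
      simpa [HasRight, Nat.sub_add_cancel h₂.1] using hp)
    simp [stepUp, this, HasRight, Nat.sub_add_cancel h₂.1, hp]

def pathEnd (D : Finset (ℕ × ℕ)) : ℕ × ℕ → ℕ × ℕ := chainEnd D (stepUp D)

def pathStart (D : Finset (ℕ × ℕ)) : ℕ × ℕ → ℕ × ℕ := chainEnd D (stepDown D)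

lemma pathEnd_mem (hp : p ∈ D) : pathEnd D p ∈ D :=
  chainEnd_mem (fun _ _ h => (stepUp_spec h).1) hp

lemma pathStart_mem (hp : p ∈ D) : pathStart D p ∈ D :=
  chainEnd_mem (fun _ _ h => (stepDown_spec h).1) hp

lemma stepUp_pathEnd (p : ℕ × ℕ) : stepUp D (pathEnd D p) = none :=
  eq_none_chainEnd (fun _ _ h => stepUp_spec h) p

lemma stepDown_pathStart (p : ℕ × ℕ) : stepDown D (pathStart D p) = none :=
  eq_none_chainEnd (fun _ _ h => stepDown_spec h) p

lemma pathEnd_eq_self (h : stepUp D p = none) : pathEnd D p = p := chainEnd_of_eq_none h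

lemma pathStart_eq_self (h : stepDown D p = none) : pathStart D p = p := chainEnd_of_eq_none h

lemma NoBranching.pathEnd_pathStart (hD : NoBranching D) (hp : p ∈ D) :
    pathEnd D (pathStart D p) = pathEnd D p :=
  walk_invariant (S := ↑D) (g := pathEnd D) (fun _ _ h => (stepDown_spec h).1)
    (fun _ _ hp h => chainEnd_of_eq_some (fun _ _ h => stepUp_spec h)
      (hD.stepUp_of_stepDown hp h)) D.card hp

lemma NoBranching.pathStart_pathEnd (hD : NoBranching D) (hp : p ∈ D) :
    pathStart D (pathEnd D p) = pathStart D p :=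
  walk_invariant (S := ↑D) (g := pathStart D) (fun _ _ h => (stepUp_spec h).1)
    (fun _ _ hp h => chainEnd_of_eq_some (fun _ _ h => stepDown_spec h)
      (hD.stepDown_of_stepUp hp h)) D.card hp

def upOrStart (D : Finset (ℕ × ℕ)) (p : ℕ × ℕ) : ℕ × ℕ :=
  if HasUp D p then (p.1 - 1, p.2) else pathStart D p

def downOrEnd (D : Finset (ℕ × ℕ)) (p : ℕ × ℕ) : ℕ × ℕ :=
  if HasDown D p then (p.1 + 1, p.2) else pathEnd D p

lemma upOrStart_mem (hp : p ∈ D) : upOrStart D p ∈ D := by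
  unfold upOrStart
  split_ifs with h
  exacts [h.2, pathStart_mem hp]

lemma downOrEnd_mem (hp : p ∈ D) : downOrEnd D p ∈ D := by
  unfold downOrEnd
  split_ifs with h
  exacts [h, pathEnd_mem hp]

lemma NoBranching.downOrEnd_upOrStart (hD : NoBranching D) (hp : p ∈ D)
    (h : HasUp D p ∨ ¬ HasRight D p) : downOrEnd D (upOrStart D p) = p := by
  obtain ⟨i, j⟩ := p
  by_cases hup : HasUp D (i, j)
  · have : HasDown D (i - 1, j) := by simpa [HasDown, Nat.sub_add_cancel hup.1] using hp
    rw [upOrStart, if_pos hup, downOrEnd, if_pos this, Nat.sub_add_cancel hup.1]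
  · have hs := (stepDown_eq_none_iff.1 (stepDown_pathStart (D := D) (i, j))).1
    simp only [upOrStart, downOrEnd, hup, if_false, hs, hD.pathEnd_pathStart hp]
    exact pathEnd_eq_self (stepUp_eq_none_iff.2 ⟨hup, h.resolve_left hup⟩)

lemma NoBranching.upOrStart_downOrEnd (hD : NoBranching D) (hp : p ∈ D)
    (h : HasDown D p ∨ ¬ HasLeft D p) : upOrStart D (downOrEnd D p) = p := by
  obtain ⟨i, j⟩ := p
  by_cases hdown : HasDown D (i, j)
  · have : HasUp D (i + 1, j) := ⟨by simp, by simpa using hp⟩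
    rw [downOrEnd, if_pos hdown, upOrStart, if_pos this, Nat.add_sub_cancel]
  · have hs := (stepUp_eq_none_iff.1 (stepUp_pathEnd (D := D) (i, j))).1
    simp only [upOrStart, downOrEnd, hdown, if_false, hs, hD.pathStart_pathEnd hp]
    exact pathStart_eq_self (stepDown_eq_none_iff.2 ⟨hdown, h.resolve_left hdown⟩)

end Paths

section Tableaux

variable {NA : ℕ} {C : Finset (ℕ × ℕ)} {prm : Fin NA → Bool} {T : {p // p ∈ C} → Fin NA}
  {a b : Fin NA}

lemma le_of_val_eq_succ (hab : (b : ℕ) = a + 1) : a ≤ b := Fin.le_def.2 (by omega)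

lemma ne_of_val_eq_succ (hab : (b : ℕ) = a + 1) : a ≠ b := fun h => by rw [h] at hab; omega

lemma mem_Icc_iff_of_val_eq_succ {x : Fin NA} (hab : (b : ℕ) = a + 1) :
    x ∈ Set.Icc a b ↔ x = a ∨ x = b := by
  simp only [Set.mem_Icc, Fin.le_def, Fin.ext_iff]
  omega

lemma eq_of_iff_of_mem_Icc {x y c : Fin NA} (hab : (b : ℕ) = a + 1)
    (hx : x ∈ Set.Icc a b) (hy : y ∈ Set.Icc a b) (hc : c = a ∨ c = b) (h : x = c ↔ y = c) :
    x = y := by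
  rw [mem_Icc_iff_of_val_eq_succ hab] at hx hy
  have hab' := ne_of_val_eq_succ hab
  rcases hc with rfl | rfl <;> rcases hx with rfl | rfl <;> rcases hy with rfl | rfl <;>
    simp_all [eq_comm]

lemma card_filter_mem_Icc {ι : Type*} [Fintype ι] [DecidableEq ι] (hab : (b : ℕ) = a + 1)
    (f : ι → Fin NA) :
    (Finset.univ.filter fun i => f i ∈ Set.Icc a b).card =
      (Finset.univ.filter fun i => f i = a).card + (Finset.univ.filter fun i => f i = b).card := by
  rw [← Finset.card_union_of_disjoint (Finset.disjoint_filter.2 fun i _ h h' =>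
    ne_of_val_eq_succ hab (h.symm.trans h')), ← Finset.filter_or]
  simp only [mem_Icc_iff_of_val_eq_succ hab]

lemma prod_comp_eq_of_card_filter_eq {ι κ M : Type*} [Fintype ι] [Fintype κ] [DecidableEq κ]
    [CommMonoid M] {f g : ι → κ}
    (h : ∀ r, (Finset.univ.filter fun i => f i = r).card =
      (Finset.univ.filter fun i => g i = r).card) (w : κ → M) : ∏ i, w (f i) = ∏ i, w (g i) := by
  have key : ∀ f : ι → κ, ∏ i, w (f i) = ∏ r, w r ^ (Finset.univ.filter fun i => f i = r).card := by
    intro f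
    rw [← Finset.prod_fiberwise Finset.univ f]
    refine Finset.prod_congr rfl fun r _ => ?_
    rw [Finset.prod_congr rfl fun i hi => by rw [(Finset.mem_filter.1 hi).2], Finset.prod_const]
  simp only [key f, key g, h]

lemma le_of_mem_Icc_of_notMem {α : Type*} [LinearOrder α] {a b x x' y : α}
    (hx : x ∈ Set.Icc a b) (hx' : x' ∈ Set.Icc a b) (hy : y ∉ Set.Icc a b) (h : x ≤ y) :
    x' ≤ y :=
  hx'.2.trans (not_le.1 fun hyb => hy ⟨hx.1.trans h, hyb⟩).le

lemma le_of_notMem_of_mem_Icc {α : Type*} [LinearOrder α] {a b x x' y : α}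
    (hx : x ∈ Set.Icc a b) (hx' : x' ∈ Set.Icc a b) (hy : y ∉ Set.Icc a b) (h : y ≤ x) :
    y ≤ x' :=
  (not_le.1 fun hay => hy ⟨hay, h.trans hx.2⟩).le.trans hx'.1

lemma le_of_le_of_not_both_mem_Icc {S : {p // p ∈ C} → Fin NA} {u v : {p // p ∈ C}}
    (hout : ∀ u, T u ∉ Set.Icc a b → S u = T u)
    (hin : ∀ u, T u ∈ Set.Icc a b → S u ∈ Set.Icc a b)
    (huv : ¬ (T u ∈ Set.Icc a b ∧ T v ∈ Set.Icc a b)) (h : T u ≤ T v) : S u ≤ S v := by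
  by_cases hu : T u ∈ Set.Icc a b
  · have hv : T v ∉ Set.Icc a b := fun hv => huv ⟨hu, hv⟩
    rw [hout v hv]
    exact le_of_mem_Icc_of_notMem hu (hin u hu) hv h
  · rw [hout u hu]
    by_cases hv : T v ∈ Set.Icc a b
    · exact le_of_notMem_of_mem_Icc hv (hin v hv) hu h
    · rwa [hout v hv]

lemma notMem_Icc_of_eq_of_not_both_mem_Icc {S : {p // p ∈ C} → Fin NA} {u v : {p // p ∈ C}}
    (hout : ∀ u, T u ∉ Set.Icc a b → S u = T u)
    (hin : ∀ u, T u ∈ Set.Icc a b → S u ∈ Set.Icc a b)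
    (huv : ¬ (T u ∈ Set.Icc a b ∧ T v ∈ Set.Icc a b)) (h : S u = S v) :
    T u ∉ Set.Icc a b ∧ T v ∉ Set.Icc a b := by
  by_cases hu : T u ∈ Set.Icc a b
  · have hv : T v ∉ Set.Icc a b := fun hv => huv ⟨hu, hv⟩
    refine absurd (hin u hu) ?_
    rwa [h, hout v hv]
  · refine ⟨hu, fun hv => hu ?_⟩
    rw [← hout u hu, h]
    exact hin v hv

theorem IsSuperTab.of_eq_of_notMem_Icc {prm' : Fin NA → Bool} {S : {p // p ∈ C} → Fin NA}
    (hT : IsSuperTab C prm T) (hprm : ∀ r ∉ Set.Icc a b, prm' r = prm r)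
    (hout : ∀ u, T u ∉ Set.Icc a b → S u = T u)
    (hin : ∀ u, T u ∈ Set.Icc a b → S u ∈ Set.Icc a b)
    (hrow : ∀ u v, T u ∈ Set.Icc a b → T v ∈ Set.Icc a b → u.1.1 = v.1.1 → u.1.2 < v.1.2 →
      S u ≤ S v ∧ (prm' (S u) = true → S u ≠ S v))
    (hcol : ∀ u v, T u ∈ Set.Icc a b → T v ∈ Set.Icc a b → u.1.2 = v.1.2 → u.1.1 < v.1.1 →
      S u ≤ S v ∧ (prm' (S u) = false → S u ≠ S v)) :
    IsSuperTab C prm' S := by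
  refine ⟨fun u v h₁ h₂ => ?_, fun u v h₁ h₂ => ?_, fun u v h₁ h₂ hp heq => ?_,
    fun u v h₁ h₂ hp heq => ?_⟩
  all_goals by_cases huv : T u ∈ Set.Icc a b ∧ T v ∈ Set.Icc a b
  · rcases h₂.lt_or_eq with h₂ | h₂
    · exact (hrow u v huv.1 huv.2 h₁ h₂).1
    · rw [Subtype.ext (Prod.ext h₁ h₂)]
  · exact le_of_le_of_not_both_mem_Icc hout hin huv (hT.1 u v h₁ h₂)
  · rcases h₂.lt_or_eq with h₂ | h₂
    · exact (hcol u v huv.1 huv.2 h₁ h₂).1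
    · rw [Subtype.ext (Prod.ext h₂ h₁)]
  · exact le_of_le_of_not_both_mem_Icc hout hin huv (hT.2.1 u v h₁ h₂)
  · rcases Nat.lt_or_gt_of_ne h₂ with h₂ | h₂
    · exact (hcol u v huv.1 huv.2 h₁ h₂).2 hp heq
    · exact (hcol v u huv.2 huv.1 h₁.symm h₂).2 (heq ▸ hp) heq.symm
  · obtain ⟨hu, hv⟩ := notMem_Icc_of_eq_of_not_both_mem_Icc hout hin huv heq
    rw [hout u hu, hprm _ hu] at hp
    rw [hout u hu, hout v hv] at heq
    exact hT.2.2.1 u v h₁ h₂ hp heq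
  · rcases Nat.lt_or_gt_of_ne h₂ with h₂ | h₂
    · exact (hrow u v huv.1 huv.2 h₁ h₂).2 hp heq
    · exact (hrow v u huv.2 huv.1 h₁.symm h₂).2 (heq ▸ hp) heq.symm
  · obtain ⟨hu, hv⟩ := notMem_Icc_of_eq_of_not_both_mem_Icc hout hin huv heq
    rw [hout u hu, hprm _ hu] at hp
    rw [hout u hu, hout v hv] at heq
    exact hT.2.2.2 u v h₁ h₂ hp heq

def cellsIcc (T : {p // p ∈ C} → Fin NA) (a b : Fin NA) : Finset (ℕ × ℕ) :=
  C.filter fun p => ∃ h : p ∈ C, T ⟨p, h⟩ ∈ Set.Icc a b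

lemma mem_cellsIcc {u : {p // p ∈ C}} : u.1 ∈ cellsIcc T a b ↔ T u ∈ Set.Icc a b := by
  simp [cellsIcc, u.2]

lemma mem_of_mem_cellsIcc {p : ℕ × ℕ} (h : p ∈ cellsIcc T a b) : p ∈ C :=
  (Finset.mem_filter.1 h).1

lemma cellsIcc_eq_of_eq_of_notMem {S : {p // p ∈ C} → Fin NA}
    (hout : ∀ u, T u ∉ Set.Icc a b → S u = T u)
    (hin : ∀ u, T u ∈ Set.Icc a b → S u ∈ Set.Icc a b) : cellsIcc S a b = cellsIcc T a b := by
  ext p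
  by_cases hp : p ∈ C
  · rw [mem_cellsIcc (u := ⟨p, hp⟩), mem_cellsIcc (u := ⟨p, hp⟩)]
    by_cases h : T ⟨p, hp⟩ ∈ Set.Icc a b
    · exact iff_of_true (hin _ h) h
    · rw [hout _ h]
  · exact iff_of_false (fun h => hp (mem_of_mem_cellsIcc h)) (fun h => hp (mem_of_mem_cellsIcc h))

abbrev HasEntry (T : {p // p ∈ C} → Fin NA) (p : ℕ × ℕ) (v : Fin NA) : Prop :=
  ∃ h : p ∈ C, T ⟨p, h⟩ = v

lemma hasEntry_iff {u : {p // p ∈ C}} {v : Fin NA} : HasEntry T u.1 v ↔ T u = v :=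
  ⟨fun ⟨_, h⟩ => h, fun h => ⟨u.2, h⟩⟩

lemma IsSuperTab.isSkewShape_cellsIcc (hT : IsSuperTab C prm T) (hC : IsSkewShape C)
    (a b : Fin NA) : IsSkewShape (cellsIcc T a b) := by
  have between : ∀ u v w : {p // p ∈ C}, u.1 ∈ cellsIcc T a b → w.1 ∈ cellsIcc T a b →
      T u ≤ T v → T v ≤ T w → v.1 ∈ cellsIcc T a b := by
    intro u v w hu hw h₁ h₂
    rw [mem_cellsIcc] at hu hw ⊢
    exact ⟨hu.1.trans h₁, h₂.trans hw.2⟩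
  refine ⟨fun h₁ h₂ hj₁ hj₂ => ?_, fun h₁ h₂ hi₁ hi₂ => ?_, fun h₁ h₂ => ?_⟩
  · have hC₁ := mem_of_mem_cellsIcc h₁
    have hC₂ := mem_of_mem_cellsIcc h₂
    exact between ⟨_, hC₁⟩ ⟨_, hC.row_convex hC₁ hC₂ hj₁ hj₂⟩ ⟨_, hC₂⟩ h₁ h₂
      (hT.1 _ _ rfl hj₁) (hT.1 _ _ rfl hj₂)
  · have hC₁ := mem_of_mem_cellsIcc h₁
    have hC₂ := mem_of_mem_cellsIcc h₂
    exact between ⟨_, hC₁⟩ ⟨_, hC.col_convex hC₁ hC₂ hi₁ hi₂⟩ ⟨_, hC₂⟩ h₁ h₂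
      (hT.2.1 _ _ rfl hi₁) (hT.2.1 _ _ rfl hi₂)
  · have hC₁ := mem_of_mem_cellsIcc h₁
    have hC₂ := mem_of_mem_cellsIcc h₂
    obtain ⟨hr, hd⟩ := hC.diag_fill hC₁ hC₂
    exact ⟨between ⟨_, hC₁⟩ ⟨_, hr⟩ ⟨_, hC₂⟩ h₁ h₂ (hT.1 _ _ rfl (by simp))
        (hT.2.1 _ _ rfl (by simp)),
      between ⟨_, hC₁⟩ ⟨_, hd⟩ ⟨_, hC₂⟩ h₁ h₂ (hT.2.1 _ _ rfl (by simp))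
        (hT.1 _ _ rfl (by simp))⟩

section TwoLetters

variable {u : {p // p ∈ C}}

lemma IsSuperTab.eq_b_of_hasUp (hT : IsSuperTab C prm T) (hab : (b : ℕ) = a + 1)
    (hu : u.1 ∈ cellsIcc T a b) (ha : prm a = false) (h : HasUp (cellsIcc T a b) u.1) :
    T u = b := by
  let t : {p // p ∈ C} := ⟨_, mem_of_mem_cellsIcc h.2⟩
  have hle : T t ≤ T u := hT.2.1 t u rfl (Nat.sub_le _ _)
  refine ((mem_Icc_iff_of_val_eq_succ hab).1 (mem_cellsIcc.1 hu)).resolve_left fun hua => ?_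
  have hta : T t = a := le_antisymm (hle.trans hua.le) (mem_cellsIcc.1 h.2).1
  exact hT.2.2.1 t u rfl (by simp only [t]; omega) (by rw [hta, ha]) (hta.trans hua.symm)

lemma IsSuperTab.eq_a_of_hasRight (hT : IsSuperTab C prm T) (hab : (b : ℕ) = a + 1)
    (hu : u.1 ∈ cellsIcc T a b) (hb : prm b = true) (h : HasRight (cellsIcc T a b) u.1) :
    T u = a := by
  let r : {p // p ∈ C} := ⟨_, mem_of_mem_cellsIcc h⟩
  have hle : T u ≤ T r := hT.1 u r rfl (Nat.le_succ _)
  refine ((mem_Icc_iff_of_val_eq_succ hab).1 (mem_cellsIcc.1 hu)).resolve_right fun hub => ?_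
  have hrb : T r = b := le_antisymm (mem_cellsIcc.1 h).2 (hub.symm.le.trans hle)
  exact hT.2.2.2 u r rfl (by simp [r]) (by rw [hub, hb]) (hub.trans hrb.symm)

lemma IsSuperTab.eq_a_of_hasDown (hT : IsSuperTab C prm T) (hab : (b : ℕ) = a + 1)
    (hu : u.1 ∈ cellsIcc T a b) (hb : prm b = false) (h : HasDown (cellsIcc T a b) u.1) :
    T u = a := by
  let d : {p // p ∈ C} := ⟨_, mem_of_mem_cellsIcc h⟩
  have hle : T u ≤ T d := hT.2.1 u d rfl (Nat.le_succ _)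
  refine ((mem_Icc_iff_of_val_eq_succ hab).1 (mem_cellsIcc.1 hu)).resolve_right fun hub => ?_
  have hdb : T d = b := le_antisymm (mem_cellsIcc.1 h).2 (hub.symm.le.trans hle)
  exact hT.2.2.1 u d rfl (by simp [d]) (by rw [hub, hb]) (hub.trans hdb.symm)

lemma IsSuperTab.eq_b_of_hasLeft (hT : IsSuperTab C prm T) (hab : (b : ℕ) = a + 1)
    (hu : u.1 ∈ cellsIcc T a b) (ha : prm a = true) (h : HasLeft (cellsIcc T a b) u.1) :
    T u = b := by
  let l : {p // p ∈ C} := ⟨_, mem_of_mem_cellsIcc h.2⟩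
  have hle : T l ≤ T u := hT.1 l u rfl (Nat.sub_le _ _)
  refine ((mem_Icc_iff_of_val_eq_succ hab).1 (mem_cellsIcc.1 hu)).resolve_left fun hua => ?_
  have hla : T l = a := le_antisymm (hle.trans hua.le) (mem_cellsIcc.1 h.2).1
  exact hT.2.2.2 l u rfl (by simp only [l]; omega) (by rw [hla, ha]) (hla.trans hua.symm)

end TwoLetters

lemma IsSuperTab.noBranching (hT : IsSuperTab C prm T) (hC : IsSkewShape C)
    (hab : (b : ℕ) = a + 1) (hne : prm a ≠ prm b) : NoBranching (cellsIcc T a b) := by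
  have hD := hT.isSkewShape_cellsIcc hC a b
  have hab' := ne_of_val_eq_succ hab
  have hb : prm b = !prm a := by cases h₁ : prm a <;> cases h₂ : prm b <;> simp_all
  -- Each branching forces one cell to hold both letters: the branching cell itself, or the cell
  -- diagonally opposite its two neighbours, which lies in the skew shape `cellsIcc T a b`.
  constructor
  · rintro ⟨i, j⟩ hp ⟨hi, hup⟩ hright
    cases ha : prm a
    · refine hab' ((hT.eq_a_of_hasRight hab (u := ⟨_, mem_of_mem_cellsIcc hp⟩) hp
        (by simp [hb, ha]) hright).symm.trans (hT.eq_b_of_hasUp hab hp ha ⟨hi, hup⟩))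
    · have hdown : HasDown (cellsIcc T a b) (i - 1, j + 1) := by
        show (i - 1 + 1, j + 1) ∈ _
        rwa [Nat.sub_add_cancel hi]
      obtain ⟨hd, -⟩ := hD.diag_fill hup hdown
      refine hab' ((hT.eq_a_of_hasDown hab (u := ⟨_, mem_of_mem_cellsIcc hd⟩) hd
        (by simp [hb, ha]) hdown).symm.trans (hT.eq_b_of_hasLeft hab hd ha ?_))
      exact ⟨by simp, by simpa using hup⟩
  · rintro ⟨i, j⟩ hp hdown ⟨hj, hleft⟩
    cases ha : prm a
    · have hright : HasRight (cellsIcc T a b) (i + 1, j - 1) := by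
        show (i + 1, j - 1 + 1) ∈ _
        rwa [Nat.sub_add_cancel hj]
      obtain ⟨-, hd⟩ := hD.diag_fill hleft hright
      refine hab' ((hT.eq_a_of_hasRight hab (u := ⟨_, mem_of_mem_cellsIcc hd⟩) hd
        (by simp [hb, ha]) hright).symm.trans (hT.eq_b_of_hasUp hab hd ha ?_))
      exact ⟨by simp, by simpa using hleft⟩
    · exact hab' ((hT.eq_a_of_hasDown hab (u := ⟨_, mem_of_mem_cellsIcc hp⟩) hp
        (by simp [hb, ha]) hdown).symm.trans (hT.eq_b_of_hasLeft hab hp ha ⟨hj, hleft⟩))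

end Tableaux

section Flip

variable {NA : ℕ} {C : Finset (ℕ × ℕ)} {prm : Fin NA → Bool} {T S : {p // p ∈ C} → Fin NA}
  {a b : Fin NA} {u : {p // p ∈ C}}

/-- In a tableau for `a < b′` the cells holding `a` or `b` form lattice paths on which every
cell but the last is forced (`b` if the path goes on upwards, `a` if it goes on to the right);
for `a′ < b` every cell but the first is forced (`a` if the path comes from below, `b` if it comes
from the left). `flipTab` writes the forced letters for `a′ < b`, and `a` into the first cell of
a path exactly when its last cell held `b`; `unflipTab` is the inverse construction. -/
def flipTab (T : {p // p ∈ C} → Fin NA) (a b : Fin NA) : {p // p ∈ C} → Fin NA := fun u =>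
  if u.1 ∈ cellsIcc T a b then
    if HasDown (cellsIcc T a b) u.1 ∨
        ¬ HasLeft (cellsIcc T a b) u.1 ∧ HasEntry T (pathEnd (cellsIcc T a b) u.1) b then a
    else b
  else T u

def unflipTab (S : {p // p ∈ C} → Fin NA) (a b : Fin NA) : {p // p ∈ C} → Fin NA := fun u =>
  if u.1 ∈ cellsIcc S a b then
    if HasUp (cellsIcc S a b) u.1 ∨
        ¬ HasRight (cellsIcc S a b) u.1 ∧ HasEntry S (pathStart (cellsIcc S a b) u.1) a then b
    else a
  else S u

lemma flipTab_of_notMem (h : u.1 ∉ cellsIcc T a b) : flipTab T a b u = T u := if_neg h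

lemma unflipTab_of_notMem (h : u.1 ∉ cellsIcc S a b) : unflipTab S a b u = S u := if_neg h

lemma flipTab_mem_Icc (hab : a ≤ b) (h : u.1 ∈ cellsIcc T a b) :
    flipTab T a b u ∈ Set.Icc a b := by
  unfold flipTab
  split_ifs
  exacts [⟨le_rfl, hab⟩, ⟨hab, le_rfl⟩]

lemma unflipTab_mem_Icc (hab : a ≤ b) (h : u.1 ∈ cellsIcc S a b) :
    unflipTab S a b u ∈ Set.Icc a b := by
  unfold unflipTab
  split_ifs
  exacts [⟨hab, le_rfl⟩, ⟨le_rfl, hab⟩]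

lemma flipTab_of_hasDown (hu : u.1 ∈ cellsIcc T a b) (h : HasDown (cellsIcc T a b) u.1) :
    flipTab T a b u = a := by
  simp only [flipTab, if_pos hu, if_pos (Or.inl h)]

lemma unflipTab_of_hasUp (hu : u.1 ∈ cellsIcc S a b) (h : HasUp (cellsIcc S a b) u.1) :
    unflipTab S a b u = b := by
  simp only [unflipTab, if_pos hu, if_pos (Or.inl h)]

lemma flipTab_of_hasLeft (hu : u.1 ∈ cellsIcc T a b) (hd : ¬ HasDown (cellsIcc T a b) u.1)
    (hl : HasLeft (cellsIcc T a b) u.1) : flipTab T a b u = b := by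
  simp only [flipTab, if_pos hu]
  rw [if_neg (by tauto)]

lemma unflipTab_of_hasRight (hu : u.1 ∈ cellsIcc S a b) (hup : ¬ HasUp (cellsIcc S a b) u.1)
    (hr : HasRight (cellsIcc S a b) u.1) : unflipTab S a b u = a := by
  simp only [unflipTab, if_pos hu]
  rw [if_neg (by tauto)]

lemma flipTab_eq_a_iff (hab : a ≠ b) (hu : u.1 ∈ cellsIcc T a b)
    (hd : ¬ HasDown (cellsIcc T a b) u.1) (hl : ¬ HasLeft (cellsIcc T a b) u.1) :
    flipTab T a b u = a ↔ HasEntry T (pathEnd (cellsIcc T a b) u.1) b := by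
  simp only [flipTab, if_pos hu, hd, hl, false_or, not_false_eq_true, true_and]
  split_ifs with h <;> simp [h, hab.symm]

lemma unflipTab_eq_b_iff (hab : a ≠ b) (hu : u.1 ∈ cellsIcc S a b)
    (hup : ¬ HasUp (cellsIcc S a b) u.1) (hr : ¬ HasRight (cellsIcc S a b) u.1) :
    unflipTab S a b u = b ↔ HasEntry S (pathStart (cellsIcc S a b) u.1) a := by
  simp only [unflipTab, if_pos hu, hup, hr, false_or, not_false_eq_true, true_and]
  split_ifs with h <;> simp [h, hab]

lemma cellsIcc_flipTab (hab : a ≤ b) : cellsIcc (flipTab T a b) a b = cellsIcc T a b :=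
  cellsIcc_eq_of_eq_of_notMem (fun _ hu => flipTab_of_notMem (mt mem_cellsIcc.1 hu))
    (fun _ hu => flipTab_mem_Icc hab (mem_cellsIcc.2 hu))

lemma cellsIcc_unflipTab (hab : a ≤ b) : cellsIcc (unflipTab S a b) a b = cellsIcc S a b :=
  cellsIcc_eq_of_eq_of_notMem (fun _ hu => unflipTab_of_notMem (mt mem_cellsIcc.1 hu))
    (fun _ hu => unflipTab_mem_Icc hab (mem_cellsIcc.2 hu))

lemma swap_eq_self_of_notMem_Icc (hab : (b : ℕ) = a + 1) {r : Fin NA} (hr : r ∉ Set.Icc a b) :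
    Equiv.swap a b r = r :=
  Equiv.swap_apply_of_ne_of_ne (by rintro rfl; exact hr ⟨le_rfl, le_of_val_eq_succ hab⟩)
    (by rintro rfl; exact hr ⟨le_of_val_eq_succ hab, le_rfl⟩)

theorem isSuperTab_flipTab (hT : IsSuperTab C prm T) (hC : IsSkewShape C)
    (hab : (b : ℕ) = a + 1) (ha : prm a = false) (hb : prm b = true) :
    IsSuperTab C (prm ∘ Equiv.swap a b) (flipTab T a b) := by
  have hD := hT.isSkewShape_cellsIcc hC a b
  have hN := hT.noBranching hC hab (by rw [ha, hb]; decide)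
  have hle := le_of_val_eq_succ hab
  refine hT.of_eq_of_notMem_Icc (fun r hr => by simp [swap_eq_self_of_notMem_Icc hab hr])
    (fun u hu => flipTab_of_notMem (mt mem_cellsIcc.1 hu))
    (fun u hu => flipTab_mem_Icc hle (mem_cellsIcc.2 hu)) (fun u v hu hv h₁ h₂ => ?_)
    (fun u v hu hv h₁ h₂ => ?_)
  · rw [← mem_cellsIcc] at hu hv
    have hl := hD.hasLeft_of_lt hu hv h₁ h₂
    rw [flipTab_of_hasLeft hv (fun hd => hN.not_down_and_left _ hv hd hl) hl]
    refine ⟨(flipTab_mem_Icc hle hu).2, fun hp h => ?_⟩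
    simp [h, ha] at hp
  · rw [← mem_cellsIcc] at hu hv
    rw [flipTab_of_hasDown hu (hD.hasDown_of_lt hu hv h₁ h₂)]
    refine ⟨(flipTab_mem_Icc hle hv).1, fun hp => ?_⟩
    simp [hb] at hp

theorem isSuperTab_unflipTab (hS : IsSuperTab C (prm ∘ Equiv.swap a b) S) (hC : IsSkewShape C)
    (hab : (b : ℕ) = a + 1) (ha : prm a = false) (hb : prm b = true) :
    IsSuperTab C prm (unflipTab S a b) := by
  have hD := hS.isSkewShape_cellsIcc hC a b
  have hN := hS.noBranching hC hab (by simp [ha, hb])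
  have hle := le_of_val_eq_succ hab
  refine hS.of_eq_of_notMem_Icc (fun r hr => by simp [swap_eq_self_of_notMem_Icc hab hr])
    (fun u hu => unflipTab_of_notMem (mt mem_cellsIcc.1 hu))
    (fun u hu => unflipTab_mem_Icc hle (mem_cellsIcc.2 hu)) (fun u v hu hv h₁ h₂ => ?_)
    (fun u v hu hv h₁ h₂ => ?_)
  · rw [← mem_cellsIcc] at hu hv
    have hr := hD.hasRight_of_lt hu hv h₁ h₂
    rw [unflipTab_of_hasRight hu (fun hup => hN.not_up_and_right _ hu hup hr) hr]
    refine ⟨(unflipTab_mem_Icc hle hv).1, fun hp => ?_⟩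
    simp [ha] at hp
  · rw [← mem_cellsIcc] at hu hv
    rw [unflipTab_of_hasUp hv (hD.hasUp_of_lt hu hv h₁ h₂)]
    refine ⟨(unflipTab_mem_Icc hle hu).2, fun hp h => ?_⟩
    simp [h, hb] at hp

theorem IsSuperTab.unflipTab_flipTab (hT : IsSuperTab C prm T) (hC : IsSkewShape C)
    (hab : (b : ℕ) = a + 1) (ha : prm a = false) (hb : prm b = true) :
    unflipTab (flipTab T a b) a b = T := by
  have hN := hT.noBranching hC hab (by rw [ha, hb]; decide)
  have hle := le_of_val_eq_succ hab
  have hne := ne_of_val_eq_succ hab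
  have hD := cellsIcc_flipTab (T := T) hle
  funext u
  by_cases hu : u.1 ∈ cellsIcc T a b
  · have hu' : u.1 ∈ cellsIcc (flipTab T a b) a b := by rwa [hD]
    by_cases hup : HasUp (cellsIcc T a b) u.1
    · rw [unflipTab_of_hasUp hu' (by rwa [hD]), hT.eq_b_of_hasUp hab hu ha hup]
    by_cases hr : HasRight (cellsIcc T a b) u.1
    · rw [unflipTab_of_hasRight hu' (by rwa [hD]) (by rwa [hD]),
        hT.eq_a_of_hasRight hab hu hb hr]
    -- `u` ends its path, so its letter is decided by the first cell of the path.
    have hs := pathStart_mem hu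
    obtain ⟨hsd, hsl⟩ := stepDown_eq_none_iff.1 (stepDown_pathStart (D := cellsIcc T a b) u.1)
    have hend : pathEnd (cellsIcc T a b) (pathStart (cellsIcc T a b) u.1) = u.1 := by
      rw [hN.pathEnd_pathStart hu]
      exact pathEnd_eq_self (stepUp_eq_none_iff.2 ⟨hup, hr⟩)
    refine eq_of_iff_of_mem_Icc hab (unflipTab_mem_Icc hle hu') (mem_cellsIcc.1 hu)
      (Or.inr rfl) ?_
    rw [unflipTab_eq_b_iff hne hu' (by rwa [hD]) (by rwa [hD]), hD,
      hasEntry_iff (u := ⟨_, mem_of_mem_cellsIcc hs⟩), flipTab_eq_a_iff hne hs hsd hsl, hend,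
      hasEntry_iff]
  · rw [unflipTab_of_notMem (by rwa [hD]), flipTab_of_notMem hu]

theorem IsSuperTab.flipTab_unflipTab (hS : IsSuperTab C (prm ∘ Equiv.swap a b) S)
    (hC : IsSkewShape C) (hab : (b : ℕ) = a + 1) (ha : prm a = false) (hb : prm b = true) :
    flipTab (unflipTab S a b) a b = S := by
  have hN := hS.noBranching hC hab (by simp [ha, hb])
  have hle := le_of_val_eq_succ hab
  have hne := ne_of_val_eq_succ hab
  have hD := cellsIcc_unflipTab (S := S) hle
  funext u
  by_cases hu : u.1 ∈ cellsIcc S a b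
  · have hu' : u.1 ∈ cellsIcc (unflipTab S a b) a b := by rwa [hD]
    by_cases hd : HasDown (cellsIcc S a b) u.1
    · rw [flipTab_of_hasDown hu' (by rwa [hD]), hS.eq_a_of_hasDown hab hu (by simp [ha]) hd]
    by_cases hl : HasLeft (cellsIcc S a b) u.1
    · rw [flipTab_of_hasLeft hu' (by rwa [hD]) (by rwa [hD]),
        hS.eq_b_of_hasLeft hab hu (by simp [hb]) hl]
    -- `u` starts its path, so its letter is decided by the last cell of the path.
    have he := pathEnd_mem hu
    obtain ⟨heu, her⟩ := stepUp_eq_none_iff.1 (stepUp_pathEnd (D := cellsIcc S a b) u.1)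
    have hstart : pathStart (cellsIcc S a b) (pathEnd (cellsIcc S a b) u.1) = u.1 := by
      rw [hN.pathStart_pathEnd hu]
      exact pathStart_eq_self (stepDown_eq_none_iff.2 ⟨hd, hl⟩)
    refine eq_of_iff_of_mem_Icc hab (flipTab_mem_Icc hle hu') (mem_cellsIcc.1 hu)
      (Or.inl rfl) ?_
    rw [flipTab_eq_a_iff hne hu' (by rwa [hD]) (by rwa [hD]), hD,
      hasEntry_iff (u := ⟨_, mem_of_mem_cellsIcc he⟩), unflipTab_eq_b_iff hne he heu her, hstart,
      hasEntry_iff]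
  · rw [flipTab_of_notMem (by rwa [hD]), unflipTab_of_notMem hu]

lemma IsSuperTab.flipTab_eq_a_of_upOrStart (hT : IsSuperTab C prm T) (hC : IsSkewShape C)
    (hab : (b : ℕ) = a + 1) (ha : prm a = false) (hb : prm b = true) (hu : T u = b)
    {w : {p // p ∈ C}} (hw : w.1 = upOrStart (cellsIcc T a b) u.1) : flipTab T a b w = a := by
  have hne := ne_of_val_eq_succ hab
  have huD : u.1 ∈ cellsIcc T a b := by
    rw [mem_cellsIcc, hu]
    exact ⟨le_of_val_eq_succ hab, le_rfl⟩
  have hwD : w.1 ∈ cellsIcc T a b := hw ▸ upOrStart_mem huD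
  by_cases hup : HasUp (cellsIcc T a b) u.1
  · rw [upOrStart, if_pos hup] at hw
    refine flipTab_of_hasDown hwD ?_
    rw [HasDown, hw, Nat.sub_add_cancel hup.1]
    exact huD
  · rw [upOrStart, if_neg hup] at hw
    have hr : ¬ HasRight (cellsIcc T a b) u.1 :=
      fun hr => hne ((hT.eq_a_of_hasRight hab huD hb hr).symm.trans hu)
    obtain ⟨hd, hl⟩ := stepDown_eq_none_iff.1 (stepDown_pathStart (D := cellsIcc T a b) u.1)
    rw [← hw] at hd hl
    rw [flipTab_eq_a_iff hne hwD hd hl, hw,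
      (hT.noBranching hC hab (by rw [ha, hb]; decide)).pathEnd_pathStart huD,
      pathEnd_eq_self (stepUp_eq_none_iff.2 ⟨hup, hr⟩), hasEntry_iff]
    exact hu

lemma IsSuperTab.eq_b_of_downOrEnd (hT : IsSuperTab C prm T) (hab : (b : ℕ) = a + 1)
    (ha : prm a = false) (hu : flipTab T a b u = a) {w : {p // p ∈ C}}
    (hw : w.1 = downOrEnd (cellsIcc T a b) u.1) : T w = b := by
  have hle := le_of_val_eq_succ hab
  have hne := ne_of_val_eq_succ hab
  have huD : u.1 ∈ cellsIcc T a b := by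
    rw [← cellsIcc_flipTab hle, mem_cellsIcc, hu]
    exact ⟨le_rfl, hle⟩
  by_cases hd : HasDown (cellsIcc T a b) u.1
  · rw [downOrEnd, if_pos hd] at hw
    have hwD : w.1 ∈ cellsIcc T a b := hw ▸ hd
    refine hT.eq_b_of_hasUp hab hwD ha ⟨by rw [hw]; simp, ?_⟩
    rw [hw]
    exact huD
  · rw [downOrEnd, if_neg hd] at hw
    have hl : ¬ HasLeft (cellsIcc T a b) u.1 :=
      fun hl => hne (hu.symm.trans (flipTab_of_hasLeft huD hd hl))
    rw [flipTab_eq_a_iff hne huD hd hl, ← hw, hasEntry_iff] at hu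
    exact hu

theorem IsSuperTab.card_flipTab_eq_a (hT : IsSuperTab C prm T) (hC : IsSkewShape C)
    (hab : (b : ℕ) = a + 1) (ha : prm a = false) (hb : prm b = true) :
    (Finset.univ.filter fun u => flipTab T a b u = a).card =
      (Finset.univ.filter fun u => T u = b).card := by
  have hN := hT.noBranching hC hab (by rw [ha, hb]; decide)
  have hle := le_of_val_eq_succ hab
  have hne := ne_of_val_eq_succ hab
  have hmem : ∀ u, T u = b → u.1 ∈ cellsIcc T a b := fun u h => by
    rw [mem_cellsIcc, h]
    exact ⟨hle, le_rfl⟩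
  have hmem' : ∀ u, flipTab T a b u = a → u.1 ∈ cellsIcc T a b := fun u h => by
    rw [← cellsIcc_flipTab hle, mem_cellsIcc, h]
    exact ⟨le_rfl, hle⟩
  -- A `b` of `T` below a cell of its path is matched with that cell, a `b` ending its path with
  -- the first cell of the path.
  refine Finset.card_bij' (fun u hu => ⟨downOrEnd (cellsIcc T a b) u.1, mem_of_mem_cellsIcc
      (downOrEnd_mem (hmem' u (Finset.mem_filter.1 hu).2))⟩)
    (fun u hu => ⟨upOrStart (cellsIcc T a b) u.1, mem_of_mem_cellsIcc
      (upOrStart_mem (hmem u (Finset.mem_filter.1 hu).2))⟩)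
    (fun u hu => ?_) (fun u hu => ?_) (fun u hu => ?_) (fun u hu => ?_)
  all_goals simp only [Finset.mem_filter, Finset.mem_univ, true_and] at hu ⊢
  · exact hT.eq_b_of_downOrEnd hab ha hu rfl
  · exact hT.flipTab_eq_a_of_upOrStart hC hab ha hb hu rfl
  · refine Subtype.ext (hN.upOrStart_downOrEnd (hmem' u hu) ?_)
    exact or_iff_not_imp_left.2 fun hd hl =>
      hne (hu.symm.trans (flipTab_of_hasLeft (hmem' u hu) hd hl))
  · refine Subtype.ext (hN.downOrEnd_upOrStart (hmem u hu) (Or.inr fun hr => ?_))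
    exact hne ((hT.eq_a_of_hasRight hab (hmem u hu) hb hr).symm.trans hu)

theorem IsSuperTab.prod_swap_flipTab {M : Type*} [CommMonoid M] (hT : IsSuperTab C prm T)
    (hC : IsSkewShape C) (hab : (b : ℕ) = a + 1) (ha : prm a = false) (hb : prm b = true)
    (w : Fin NA → M) : ∏ u, w (Equiv.swap a b (flipTab T a b u)) = ∏ u, w (T u) := by
  have hle := le_of_val_eq_succ hab
  have hA := hT.card_flipTab_eq_a hC hab ha hb
  have hIcc : ∀ u, flipTab T a b u ∈ Set.Icc a b ↔ T u ∈ Set.Icc a b := fun u => by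
    rw [← mem_cellsIcc, cellsIcc_flipTab hle, mem_cellsIcc]
  refine prod_comp_eq_of_card_filter_eq (fun r => ?_) w
  simp only [Equiv.swap_apply_eq_iff]
  by_cases hr : r ∈ Set.Icc a b
  · have hcard := congrArg Finset.card (Finset.filter_congr (s := Finset.univ) fun u _ => hIcc u)
    rw [card_filter_mem_Icc hab, card_filter_mem_Icc hab] at hcard
    rcases (mem_Icc_iff_of_val_eq_succ hab).1 hr with rfl | rfl
    · rw [Equiv.swap_apply_left]
      omega
    · rwa [Equiv.swap_apply_right]
  · rw [swap_eq_self_of_notMem_Icc hab hr]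
    refine congrArg Finset.card (Finset.filter_congr fun u _ => ?_)
    by_cases hu : T u ∈ Set.Icc a b
    · exact iff_of_false (fun h => hr (h ▸ (hIcc u).2 hu)) (fun h => hr (h ▸ hu))
    · rw [flipTab_of_notMem (mt mem_cellsIcc.1 hu)]

theorem tabSum_comp_swap (hC : IsSkewShape C) (hab : (b : ℕ) = a + 1) (ha : prm a = false)
    (hb : prm b = true) (w : Fin NA → A) :
    tabSum C (prm ∘ Equiv.swap a b) (fun r _ => w (Equiv.swap a b r)) =
      tabSum C prm (fun r _ => w r) := by
  unfold tabSum
  symm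
  exact Finset.sum_nbij' (flipTab · a b) (unflipTab · a b)
    (fun _ hT => by simpa using isSuperTab_flipTab (by simpa using hT) hC hab ha hb)
    (fun _ hS => by simpa using isSuperTab_unflipTab (by simpa using hS) hC hab ha hb)
    (fun _ hT => IsSuperTab.unflipTab_flipTab (by simpa using hT) hC hab ha hb)
    (fun _ hS => IsSuperTab.flipTab_unflipTab (by simpa using hS) hC hab ha hb)
    (fun _ hT => (IsSuperTab.prod_swap_flipTab (by simpa using hT) hC hab ha hb w).symm)

end Flip

section Markings

variable {NA : ℕ} {a b : Fin NA}

lemma swap_le_swap_iff (hab : (b : ℕ) = a + 1) {r s : Fin NA} (hrs : ¬ (r = a ∧ s = b))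
    (hsr : ¬ (r = b ∧ s = a)) : Equiv.swap a b r ≤ Equiv.swap a b s ↔ r ≤ s := by
  simp only [Fin.ext_iff] at hrs hsr
  rw [Equiv.swap_apply_def, Equiv.swap_apply_def]
  split_ifs <;> simp only [Fin.le_def, Fin.ext_iff] at * <;> omega

lemma idx_comp_swap {prm : Fin NA → Bool} (hab : (b : ℕ) = a + 1) (hne : prm a ≠ prm b)
    (r : Fin NA) : idx (prm ∘ Equiv.swap a b) r = idx prm (Equiv.swap a b r) := by
  refine Finset.card_equiv (Equiv.swap a b) fun s => ?_
  simp only [Finset.mem_filter, Finset.mem_univ, true_and, Function.comp_apply]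
  refine and_congr_right fun hs => (swap_le_swap_iff hab ?_ ?_).symm
  · rintro ⟨rfl, rfl⟩
    simp [hne.symm] at hs
  · rintro ⟨rfl, rfl⟩
    simp [hne] at hs

lemma wNinth_comp_swap {m n : ℕ} {prm : Fin NA → Bool} (hab : (b : ℕ) = a + 1)
    (hne : prm a ≠ prm b) (X : Fin m → ℤ → A) (Y : Fin n → ℤ → A) (r : Fin NA) (c : ℤ) :
    wNinth (prm ∘ Equiv.swap a b) X Y r c = wNinth prm X Y (Equiv.swap a b r) c := by
  simp only [wNinth, idx_comp_swap hab hne, Function.comp_apply]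

lemma wFact_zero {m n : ℕ} (prm : Fin NA → Bool) (x : Fin m → A) (y : Fin n → A) :
    wFact prm x y (fun _ => 0) = wNinth prm (fun k _ => x k) (fun l _ => y l) := by
  funext r c
  by_cases h : prm r <;> simp [wFact, wNinth, h]

def inversions (prm : Fin NA → Bool) : Finset (Fin NA × Fin NA) :=
  Finset.univ.filter fun rs => rs.1 < rs.2 ∧ prm rs.1 = true ∧ prm rs.2 = false

lemma card_inversions_comp_swap {prm : Fin NA → Bool} (hab : (b : ℕ) = a + 1)
    (ha : prm a = true) (hb : prm b = false) :
    (inversions (prm ∘ Equiv.swap a b)).card + 1 = (inversions prm).card := by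
  have hmem : (a, b) ∈ inversions prm :=
    Finset.mem_filter.2 ⟨Finset.mem_univ _, show a < b from Fin.lt_def.2 (by omega), ha, hb⟩
  rw [← Finset.card_erase_add_one hmem]
  congr 1
  refine Finset.card_equiv ((Equiv.swap a b).prodCongr (Equiv.swap a b)) fun ⟨r, s⟩ => ?_
  simp only [inversions, Finset.mem_erase, Finset.mem_filter, Finset.mem_univ, true_and,
    Equiv.prodCongr_apply, Prod.map, Function.comp_apply, ne_eq, Prod.mk.injEq]
  by_cases hrs : (r = a ∧ s = b) ∨ (r = b ∧ s = a)
  · rcases hrs with ⟨rfl, rfl⟩ | ⟨rfl, rfl⟩ <;> simp [ha, hb, Fin.lt_def, hab]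
  · push Not at hrs
    have hlt : Equiv.swap a b r < Equiv.swap a b s ↔ r < s := by
      rw [lt_iff_not_ge, lt_iff_not_ge, swap_le_swap_iff hab (by tauto) (by tauto)]
    rw [hlt, Equiv.swap_apply_eq_iff, Equiv.swap_apply_eq_iff, Equiv.swap_apply_left,
      Equiv.swap_apply_right]
    tauto

lemma card_filter_comp_swap (prm : Fin NA → Bool) (a b : Fin NA) :
    (Finset.univ.filter fun r => (prm ∘ Equiv.swap a b) r = true).card =
      (Finset.univ.filter fun r => prm r = true).card :=
  Finset.card_equiv (Equiv.swap a b) fun r => by simp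

lemma exists_adjacent_of_not_monotone {prm : Fin NA → Bool} (h : ¬ Monotone prm) :
    ∃ a b : Fin NA, (b : ℕ) = a + 1 ∧ prm a = true ∧ prm b = false := by
  cases NA with
  | zero => exact absurd (Subsingleton.monotone prm) h
  | succ k =>
    rw [Fin.monotone_iff_le_succ] at h
    push Not at h
    obtain ⟨i, hi⟩ := h
    rw [Bool.lt_iff] at hi
    exact ⟨i.castSucc, i.succ, by simp, hi.2, hi.1⟩

lemma eq_prmFirst_of_monotone {m n : ℕ} {prm : Fin (m + n) → Bool} (hmono : Monotone prm)
    (hcard : (Finset.univ.filter fun r => prm r = true).card = n) : prm = prmFirst m n := by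
  funext r
  cases hr : prm r
  · have hsub : (Finset.univ.filter fun s => prm s = true) ⊆ Finset.Ioi r := fun s hs => by
      simp only [Finset.mem_filter, Finset.mem_univ, true_and, Finset.mem_Ioi] at hs ⊢
      by_contra hsr
      exact absurd (hmono (not_lt.1 hsr)) (by rw [hs, hr]; decide)
    have := Finset.card_le_card hsub
    rw [hcard, Fin.card_Ioi] at this
    symm
    simp only [prmFirst, decide_eq_false_iff_not, not_le]
    omega
  · have hsub : Finset.Ici r ⊆ (Finset.univ.filter fun s => prm s = true) := fun s hs => by
      simp only [Finset.mem_filter, Finset.mem_univ, true_and, Finset.mem_Ici] at hs ⊢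
      exact le_antisymm (Bool.le_true _) (hr ▸ hmono hs)
    have := Finset.card_le_card hsub
    rw [hcard, Fin.card_Ici] at this
    symm
    simp only [prmFirst, decide_eq_true_eq]
    omega

theorem tabSum_wNinth_comp_swap {m n : ℕ} {C : Finset (ℕ × ℕ)} {prm : Fin NA → Bool}
    (hC : IsSkewShape C) (hab : (b : ℕ) = a + 1) (ha : prm a = true) (hb : prm b = false)
    (x : Fin m → A) (y : Fin n → A) :
    tabSum C prm (wNinth prm (fun k _ => x k) (fun l _ => y l)) =
      tabSum C (prm ∘ Equiv.swap a b)
        (wNinth (prm ∘ Equiv.swap a b) (fun k _ => x k) (fun l _ => y l)) := by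
  have hprm : (prm ∘ Equiv.swap a b) ∘ Equiv.swap a b = prm := by
    funext r
    simp
  have hw : wNinth prm (fun k _ => x k) (fun l _ => y l) = fun r _ =>
      wNinth (prm ∘ Equiv.swap a b) (fun k _ => x k) (fun l _ => y l) (Equiv.swap a b r) 0 := by
    funext r c
    conv_lhs => rw [← hprm]
    exact wNinth_comp_swap hab (by simp [ha, hb]) _ _ r c
  have h := tabSum_comp_swap (prm := prm ∘ Equiv.swap a b) hC hab (by simp [hb]) (by simp [ha])
    (fun r => wNinth (prm ∘ Equiv.swap a b) (fun k _ => x k) (fun l _ => y l) r 0)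
  rw [hprm] at h
  rw [hw]
  exact h

theorem tabSum_wNinth_eq_prmFirst {m n : ℕ} {C : Finset (ℕ × ℕ)} (hC : IsSkewShape C)
    (x : Fin m → A) (y : Fin n → A) (prm : Fin (m + n) → Bool)
    (hprm : (Finset.univ.filter fun r => prm r = true).card = n) :
    tabSum C prm (wNinth prm (fun k _ => x k) (fun l _ => y l)) =
      tabSum C (prmFirst m n) (wNinth (prmFirst m n) (fun k _ => x k) (fun l _ => y l)) := by
  induction hk : (inversions prm).card using Nat.strong_induction_on generalizing prm with
  | _ k ih =>
  by_cases hmono : Monotone prm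
  · rw [eq_prmFirst_of_monotone hmono hprm]
  obtain ⟨a, b, hab, ha, hb⟩ := exists_adjacent_of_not_monotone hmono
  rw [tabSum_wNinth_comp_swap hC hab ha hb x y]
  exact ih _ (by rw [← hk, ← card_inversions_comp_swap hab ha hb]; omega) _
    (by rw [card_filter_comp_swap, hprm]) rfl

end Markings

theorem fact_superSchur_zero_spec_general (m n : ℕ) (prm : Fin (m + n) → Bool)
    (hprm : (Finset.univ.filter fun r => prm r = true).card = n)
    (lam mu : List ℕ) (hlam : IsPartition lam) (hmu : IsPartition mu)
    (x : Fin m → A) (y : Fin n → A) :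
    tabSum (cells lam mu) prm (wFact prm x y (fun _ => (0 : A))) =
      superSchur lam mu x y := by
  rw [wFact_zero]
  exact tabSum_wNinth_eq_prmFirst (isSkewShape_cells hlam hmu) x y prm hprm

/-- **Specialisation to the first variation**: for every marked alphabet `R′` on
`{1,…,m+n}` with `n` primed letters, setting all factorial parameters to zero recovers
the classical supersymmetric skew Schur function `s_{λ/μ}(x,y)` (defined over the
alphabet `1 < 2 < ⋯ < m < 1′ < 2′ < ⋯ < n′`). -/
theorem fact_superSchur_zero_spec (m n : ℕ) (prm : Fin (m + n) → Bool)
    (hprm : (Finset.univ.filter fun r => prm r = true).card = n)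
    (lam mu : List ℕ) (hlam : IsPartition lam) (hmu : IsPartition mu)
    (hsub : Contained mu lam)
    (x : Fin m → A) (y : Fin n → A) :
    tabSum (cells lam mu) prm (wFact prm x y (fun _ => (0 : A))) =
      superSchur lam mu x y :=
  fact_superSchur_zero_spec_general m n prm hprm lam mu hlam hmu x y

end SuperSchur
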